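/- arXiv:1703.08863 — 3 statements merged into one kernel-verified Lean document; each statement's English description precedes it below -/
import Mathlib

section
/- For all real x and real y ≠ 0, |Re cot(π(x+iy)/2)| ≤ 1/sinh(π|y|). -/
/-! Writing `z = a + b i`, one has `Re cot z = sin a cos a / (sin² a + sinh² b)`. Since
`|sinh 2b| = 2 |sinh b| cosh b`, the bound is AM–GM for `|sin a| cosh b` and `|cos a| |sinh b|`,
whose squares add up to exactly that denominator. -/

open Complex Real

namespace Complex

theorem sin_re (z : ℂ) : (sin z).re = Real.sin z.re * Real.cosh z.im := by
  simp [sin_eq z, sin_ofReal_re, cosh_ofReal_re]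

theorem sin_im (z : ℂ) : (sin z).im = Real.cos z.re * Real.sinh z.im := by
  simp [sin_eq z, cos_ofReal_re, sinh_ofReal_re]

theorem cos_re (z : ℂ) : (cos z).re = Real.cos z.re * Real.cosh z.im := by
  simp [cos_eq z, cos_ofReal_re, cosh_ofReal_re]

theorem cos_im (z : ℂ) : (cos z).im = -(Real.sin z.re * Real.sinh z.im) := by
  simp [cos_eq z, sin_ofReal_re, sinh_ofReal_re]

theorem cot_re (z : ℂ) :
    (cot z).re = Real.sin z.re * Real.cos z.re / (Real.sin z.re ^ 2 + Real.sinh z.im ^ 2) := by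
  have hc := Real.cosh_sq z.im
  have hs := Real.sin_sq_add_cos_sq z.re
  rw [cot_eq_cos_div_sin, div_re, normSq_apply, sin_re, sin_im, cos_re, cos_im, ← add_div]
  congr 1
  · linear_combination Real.sin z.re * Real.cos z.re * hc
  · linear_combination Real.sin z.re ^ 2 * hc + Real.sinh z.im ^ 2 * hs

end Complex

namespace Real

theorem abs_sin_mul_cos_mul_abs_sinh_two_mul_le (a b : ℝ) :
    |sin a * cos a| * |sinh (2 * b)| ≤ sin a ^ 2 + sinh b ^ 2 :=
  calc |sin a * cos a| * |sinh (2 * b)|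
      = 2 * (|sin a| * cosh b) * (|cos a| * |sinh b|) := by
        rw [sinh_two_mul, abs_mul, abs_mul, abs_mul, abs_of_pos (cosh_pos b)]; ring
    _ ≤ (|sin a| * cosh b) ^ 2 + (|cos a| * |sinh b|) ^ 2 := two_mul_le_add_sq _ _
    _ = sin a ^ 2 + sinh b ^ 2 := by
        simp only [mul_pow, sq_abs]
        linear_combination sin a ^ 2 * cosh_sq b + sinh b ^ 2 * sin_sq_add_cos_sq a

theorem abs_sin_mul_cos_div_le (a : ℝ) {b : ℝ} (hb : b ≠ 0) :
    |sin a * cos a / (sin a ^ 2 + sinh b ^ 2)| ≤ 1 / |sinh (2 * b)| := by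
  have hsinh : 0 < |sinh (2 * b)| := by simpa using hb
  have hden : 0 < sin a ^ 2 + sinh b ^ 2 := by positivity
  rw [abs_div, abs_of_pos hden, div_le_div_iff₀ hden hsinh, one_mul]
  exact abs_sin_mul_cos_mul_abs_sinh_two_mul_le a b

end Real

theorem re_cot_bound (x y : ℝ) (hy : y ≠ 0) :
    |(Complex.cot ((Real.pi / 2 : ℂ) * (x + y * Complex.I))).re|
      ≤ 1 / Real.sinh (Real.pi * |y|) := by
  have hre : ((Real.pi / 2 : ℂ) * (x + y * Complex.I)).re = π / 2 * x := by simp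
  have him : ((Real.pi / 2 : ℂ) * (x + y * Complex.I)).im = π / 2 * y := by simp
  have hsinh : Real.sinh (π * |y|) = |Real.sinh (2 * (π / 2 * y))| := by
    rw [abs_sinh, show 2 * (π / 2 * y) = π * y by ring, abs_mul, abs_of_pos pi_pos]
  rw [cot_re, hre, him, hsinh]
  exact abs_sin_mul_cos_div_le _ (by positivity)
end

section
/- For ε ∈ {0,1} and t ∈ ℝ, |Γ_ℝ(2+ε−it) / Γ_ℝ(1+ε+it)|² ≤ ((1+ε)² + t²)/π², where Γ_ℝ(s) = π^{-s/2}Γ(s/2). -/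
/-!
Since `Γℝ (conj s) = conj (Γℝ s)`, the numerator has the norm of `Γℝ (2 + ε + t i)`, and for
real `a` the square `‖Γℝ (a + t i)‖²` is the product `Γℝ (a - t i) Γℝ (a + t i)`. For `a = 1, 2`
the reflection formula `Γ(z) Γ(1 - z) = π / sin (π z)` evaluates these products in closed form,
and `a = 3` reduces to `a = 1` by `Γℝ (s + 2) = Γℝ s * s / (2π)`. With `x = π t / 2` the claim
becomes an inequality between hyperbolic functions: `3 x cosh x ≤ (3 + x²) sinh x` together
with `π² ≤ 12` for `ε = 0`, and `sinh x ≤ min x 1 * cosh x` for `ε = 1`.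
-/

open Complex Real

/-- Γ_ℝ(s) = π^{-s/2} Γ(s/2) -/
noncomputable def GammaR (s : ℂ) : ℂ := (Real.pi : ℂ) ^ (-s / 2) * Complex.Gamma (s / 2)

open ComplexConjugate

namespace Real

lemma apply_zero_le_of_hasDerivAt {f f' : ℝ → ℝ} (hf : ∀ y, HasDerivAt f (f' y) y)
    (hf' : ∀ y, 0 < y → 0 ≤ f' y) {x : ℝ} (hx : 0 ≤ x) : f 0 ≤ f x := by
  refine monotoneOn_of_hasDerivWithinAt_nonneg (convex_Ici 0)
    (fun y _ ↦ (hf y).continuousAt.continuousWithinAt) (fun y _ ↦ (hf y).hasDerivWithinAt)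
    (fun y hy ↦ hf' y ?_) Set.self_mem_Ici hx hx
  rwa [interior_Ici] at hy

lemma sinh_le_mul_cosh {x : ℝ} (hx : 0 ≤ x) : sinh x ≤ x * cosh x := by
  have key := apply_zero_le_of_hasDerivAt (f := fun y ↦ y * cosh y - sinh y)
    (f' := fun y ↦ y * sinh y)
    (fun y ↦ (((hasDerivAt_id y).mul (hasDerivAt_cosh y)).sub (hasDerivAt_sinh y)).congr_deriv
      (by simp))
    (fun y hy ↦ mul_nonneg hy.le (sinh_nonneg_iff.2 hy.le)) hx
  simpa using key

lemma three_mul_mul_cosh_le {x : ℝ} (hx : 0 ≤ x) : 3 * x * cosh x ≤ (3 + x ^ 2) * sinh x := by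
  have key := apply_zero_le_of_hasDerivAt (f := fun y ↦ (3 + y ^ 2) * sinh y - 3 * y * cosh y)
    (f' := fun y ↦ y * (y * cosh y - sinh y))
    (fun y ↦ ((((hasDerivAt_pow 2 y).const_add 3).mul (hasDerivAt_sinh y)).sub
      (((hasDerivAt_id y).const_mul 3).mul (hasDerivAt_cosh y))).congr_deriv (by simp; ring))
    (fun y hy ↦ mul_nonneg hy.le (sub_nonneg.2 (sinh_le_mul_cosh hy.le))) hx
  simpa using key

lemma mul_cosh_div_sinh_le {t : ℝ} (ht : t ≠ 0) :
    t * cosh (π * t / 2) / (2 * π * sinh (π * t / 2)) ≤ (1 + t ^ 2) / π ^ 2 := by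
  wlog hpos : 0 < t generalizing t
  · simpa [mul_neg, neg_div, div_neg] using
      this (neg_ne_zero.2 ht) (neg_pos.2 (ht.lt_or_gt.resolve_right hpos))
  have hx : 0 ≤ π * t / 2 := by positivity
  have hsinh : 0 < sinh (π * t / 2) := sinh_pos_iff.2 (by positivity)
  have hπ : π ^ 2 ≤ 12 := by nlinarith [pi_lt_d2, pi_pos]
  rw [div_le_div_iff₀ (by positivity) (by positivity)]
  nlinarith [mul_le_mul_of_nonneg_left (three_mul_mul_cosh_le hx) (by positivity : 0 ≤ 2 * π / 3),
    mul_nonneg (sub_nonneg.2 hπ) (by positivity : 0 ≤ π * t ^ 2 * sinh (π * t / 2))]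

lemma mul_sinh_div_cosh_le {t : ℝ} (ht : t ≠ 0) :
    (1 + t ^ 2) * sinh (π * t / 2) / (2 * π * t * cosh (π * t / 2)) ≤ (4 + t ^ 2) / π ^ 2 := by
  wlog hpos : 0 < t generalizing t
  · simpa [mul_neg, neg_div, div_neg] using
      this (neg_ne_zero.2 ht) (neg_pos.2 (ht.lt_or_gt.resolve_right hpos))
  have hx : 0 ≤ π * t / 2 := by positivity
  have hcosh : 0 < cosh (π * t / 2) := cosh_pos _
  rw [div_le_div_iff₀ (by positivity) (by positivity)]
  rcases le_total t 1 with ht1 | ht1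
  · have hπ : π ^ 2 * (1 + t ^ 2) ≤ 4 * (4 + t ^ 2) := by
      have hπ10 : π ^ 2 ≤ 10 := by nlinarith [pi_lt_d2, pi_pos]
      nlinarith [mul_le_mul_of_nonneg_right hπ10 (by positivity : 0 ≤ 1 + t ^ 2)]
    nlinarith [mul_le_mul_of_nonneg_left (sinh_le_mul_cosh hx)
      (by positivity : 0 ≤ π ^ 2 * (1 + t ^ 2)),
      mul_nonneg (sub_nonneg.2 hπ) (by positivity : 0 ≤ π * t * cosh (π * t / 2))]
  · have hπ : π * (1 + t ^ 2) ≤ 2 * t * (4 + t ^ 2) := by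
      nlinarith [pi_le_four, mul_nonneg (sub_nonneg.2 ht1) (sub_nonneg.2 ht1)]
    nlinarith [mul_le_mul_of_nonneg_left (sinh_lt_cosh (π * t / 2)).le
      (by positivity : 0 ≤ π ^ 2 * (1 + t ^ 2)),
      mul_nonneg (sub_nonneg.2 hπ) (by positivity : 0 ≤ π * cosh (π * t / 2))]

end Real

namespace Complex

lemma Gammaℝ_conj (s : ℂ) : Gammaℝ (conj s) = conj (Gammaℝ s) := by
  have hπ : (π : ℂ).arg ≠ π := by
    rw [arg_ofReal_of_nonneg pi_pos.le]; exact pi_ne_zero.symm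
  have hdiv : -conj s / 2 = conj (-s / 2) := by rw [map_div₀, map_neg, map_ofNat]
  rw [Gammaℝ_def, Gammaℝ_def, map_mul, ← Gamma_conj, hdiv, cpow_conj _ _ hπ, conj_ofReal,
    map_div₀, map_ofNat]

lemma ofReal_sq_norm_Gammaℝ (s : ℂ) :
    ((‖Gammaℝ s‖ ^ 2 : ℝ) : ℂ) = Gammaℝ (conj s) * Gammaℝ s := by
  rw [Gammaℝ_conj, Complex.sq_norm, ← mul_conj, mul_comm]

lemma norm_Gammaℝ_conj (s : ℂ) : ‖Gammaℝ (conj s)‖ = ‖Gammaℝ s‖ := by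
  rw [Gammaℝ_conj, norm_conj]

lemma Gammaℝ_two : Gammaℝ 2 = 1 / π := by
  simp [Gammaℝ_def, cpow_neg_one]

lemma Gammaℝ_two_sub_mul_Gammaℝ_two_add {s : ℂ} (hs : s ≠ 0) :
    Gammaℝ (2 - s) * Gammaℝ (2 + s) = s / (2 * π * sin (π * s / 2)) := by
  have hπ : (π : ℂ) ≠ 0 := ofReal_ne_zero.2 pi_ne_zero
  calc Gammaℝ (2 - s) * Gammaℝ (2 + s)
  _ = (π ^ (-(2 - s) / 2) * π ^ (-(2 + s) / 2)) * (s / 2) *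
        (Gamma (s / 2) * Gamma (1 - s / 2)) := by
    rw [Gammaℝ_def, Gammaℝ_def, show (2 + s) / 2 = s / 2 + 1 by ring,
      Gamma_add_one _ (div_ne_zero hs two_ne_zero), show (2 - s) / 2 = 1 - s / 2 by ring]
    ring
  _ = π ^ (-2 : ℂ) * (s / 2) * (π / sin (π * (s / 2))) := by
    rw [← cpow_add _ _ hπ, Gamma_mul_Gamma_one_sub, show -(2 - s) / 2 + -(2 + s) / 2 = -2 by ring]
  _ = _ := by
    rw [cpow_neg, cpow_ofNat, mul_div_assoc']
    field_simp

lemma sq_norm_Gammaℝ_one_add_mul_I (t : ℝ) :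
    ‖Gammaℝ (1 + t * I)‖ ^ 2 = (Real.cosh (π * t / 2))⁻¹ := by
  apply ofReal_injective
  rw [ofReal_sq_norm_Gammaℝ, ofReal_inv, ofReal_cosh]
  convert Gammaℝ_one_sub_mul_Gammaℝ_one_add (t * I) using 2
  · simp [sub_eq_add_neg]
  · rw [← cos_mul_I]; push_cast; ring_nf

lemma sq_norm_Gammaℝ_two_add_mul_I {t : ℝ} (ht : t ≠ 0) :
    ‖Gammaℝ (2 + t * I)‖ ^ 2 = t / (2 * π * Real.sinh (π * t / 2)) := by
  apply ofReal_injective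
  have hs : (t : ℂ) * I ≠ 0 := mul_ne_zero (ofReal_ne_zero.2 ht) I_ne_zero
  rw [ofReal_sq_norm_Gammaℝ]
  convert Gammaℝ_two_sub_mul_Gammaℝ_two_add hs using 2
  · simp [sub_eq_add_neg, conj_ofNat]
  · push_cast
    rw [show (π : ℂ) * (t * I) / 2 = (π * t / 2) * I by ring, sin_mul_I]
    field_simp

lemma sq_norm_Gammaℝ_three_add_mul_I (t : ℝ) :
    ‖Gammaℝ (3 + t * I)‖ ^ 2 = (1 + t ^ 2) / (4 * π ^ 2 * Real.cosh (π * t / 2)) := by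
  have hs : 1 + (t : ℂ) * I ≠ 0 := by
    intro h; simpa using congrArg re h
  have hnorm : ‖1 + (t : ℂ) * I‖ ^ 2 = 1 + t ^ 2 := by
    simpa [Complex.sq_norm] using normSq_add_mul_I 1 t
  rw [show (3 : ℂ) + t * I = 1 + t * I + 2 by ring, Gammaℝ_add_two hs, norm_div, norm_div,
    norm_mul, div_pow, div_pow, mul_pow, sq_norm_Gammaℝ_one_add_mul_I, hnorm, norm_ofNat,
    norm_real, norm_of_nonneg pi_pos.le]
  field_simp
  ring

lemma sq_norm_Gammaℝ_two_add_mul_I_div_le (t : ℝ) :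
    ‖Gammaℝ (2 + t * I)‖ ^ 2 / ‖Gammaℝ (1 + t * I)‖ ^ 2 ≤ (1 + t ^ 2) / π ^ 2 := by
  rcases eq_or_ne t 0 with rfl | ht
  · simp [Gammaℝ_two, Gammaℝ_one]
  rw [sq_norm_Gammaℝ_two_add_mul_I ht, sq_norm_Gammaℝ_one_add_mul_I, div_inv_eq_mul,
    div_mul_eq_mul_div]
  exact Real.mul_cosh_div_sinh_le ht

lemma sq_norm_Gammaℝ_three_add_mul_I_div_le (t : ℝ) :
    ‖Gammaℝ (3 + t * I)‖ ^ 2 / ‖Gammaℝ (2 + t * I)‖ ^ 2 ≤ (4 + t ^ 2) / π ^ 2 := by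
  rcases eq_or_ne t 0 with rfl | ht
  · have h := sq_norm_Gammaℝ_three_add_mul_I 0
    norm_num [Gammaℝ_two] at h ⊢
    rw [h]
    field_simp
    nlinarith [pi_le_four, pi_pos]
  rw [sq_norm_Gammaℝ_three_add_mul_I, sq_norm_Gammaℝ_two_add_mul_I ht]
  convert Real.mul_sinh_div_cosh_le ht using 1
  field_simp
  ring

end Complex

theorem gammaR_ratio_bound (ε : ℝ) (hε : ε = 0 ∨ ε = 1) (t : ℝ) :
    ‖GammaR (2 + ε - t * Complex.I) / GammaR (1 + ε + t * Complex.I)‖ ^ 2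
      ≤ ((1 + ε) ^ 2 + t ^ 2) / Real.pi ^ 2 := by
  have hconj : conj (2 + ε + t * I) = 2 + ε - t * I := by simp [sub_eq_add_neg, conj_ofNat]
  change ‖Gammaℝ _ / Gammaℝ _‖ ^ 2 ≤ _
  rw [norm_div, div_pow, ← hconj, norm_Gammaℝ_conj]
  rcases hε with rfl | rfl
  · simpa using sq_norm_Gammaℝ_two_add_mul_I_div_le t
  · norm_num
    exact sq_norm_Gammaℝ_three_add_mul_I_div_le t
end

section
/- Let c > 0, B > 0, D ≥ 0, A > 0, and m an integer with |m/A| ≤ B/2. If g : ℝ → ℂ satisfies |g(t)| ≤ E(|t| + D) e^{−c|t|} for all t, then |Σ_{k≠0} g(m/A + kB)| ≤ (E/sinh(cB/2)) · (B/2 + D + B/(1 − e^{−cB})). -/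
/-!
For `k ≠ 0` the point `t = m/A + kB` satisfies `(|k| - 1/2)B ≤ |t| ≤ (|k| + 1/2)B`, so the `k`-th
term is dominated by `E e^{cB/2} (|k|B + B/2 + D) e^{-cB|k|}`. The two signs of `k` give the same
arithmetico-geometric series, and `1 - e^{-cB} = 2 e^{-cB/2} sinh(cB/2)` turns its sum into the
stated bound.
-/

open Real

theorem hasSum_int_ne_zero_natAbs {M : Type*} [AddCommMonoid M] [TopologicalSpace M]
    [ContinuousAdd M] {f : ℕ → M} {s : M} (hf : HasSum (fun n ↦ f (n + 1)) s) :
    HasSum (fun k : {k : ℤ // k ≠ 0} ↦ f k.1.natAbs) (s + s) := by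
  have h := HasSum.of_add_one_of_neg_add_one
    (f := Set.indicator {k : ℤ | k ≠ 0} (fun k ↦ f k.natAbs)) (m := s) (m' := s)
    (by convert hf using 2 with n; rw [Set.indicator_of_mem (by simp; omega)]; congr 1)
    (by convert hf using 2 with n; rw [Set.indicator_of_mem (by simp; omega)]; congr 1)
  rw [Set.indicator_of_notMem (by simp), add_zero] at h
  exact (hasSum_subtype_iff_indicator (s := {k : ℤ | k ≠ 0})).mpr h

theorem hasSum_linear_mul_geometric_succ {q : ℝ} (hq₀ : 0 ≤ q) (hq₁ : q < 1) (a b : ℝ) :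
    HasSum (fun n : ℕ ↦ (a * ((n + 1 : ℕ) : ℝ) + b) * q ^ (n + 1))
      (q / (1 - q) * (a / (1 - q) + b)) := by
  have hq : ‖q‖ < 1 := by rwa [norm_of_nonneg hq₀]
  have h := ((hasSum_coe_mul_geometric_of_norm_lt_one hq).mul_left a).add
    ((hasSum_geometric_of_lt_one hq₀ hq₁).mul_left (a + b)) |>.mul_left q
  have hterm : ∀ n : ℕ, (a * ((n + 1 : ℕ) : ℝ) + b) * q ^ (n + 1)
      = q * (a * (n * q ^ n) + (a + b) * q ^ n) := by
    intro n; push_cast; ring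
  have hsum : q / (1 - q) * (a / (1 - q) + b)
      = q * (a * (q / (1 - q) ^ 2) + (a + b) * (1 - q)⁻¹) := by
    have : 1 - q ≠ 0 := by linarith
    field_simp; ring
  simpa only [hterm, hsum] using h

-- At `x = 0` both sides are `0`, since `0⁻¹ = 0` and `2 * _ / 0 = 0`.
theorem inv_sinh_half_eq (x : ℝ) :
    (sinh (x / 2))⁻¹ = 2 * (exp (x / 2) * exp (-x)) / (1 - exp (-x)) := by
  have hexp : exp (-x) = (exp (x / 2) ^ 2)⁻¹ := by rw [← exp_nat_mul, ← exp_neg]; ring_nf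
  rw [sinh_eq, exp_neg, hexp]
  field_simp

theorem abs_add_int_mul_ge {x B : ℝ} (hB : 0 ≤ B) (hx : |x| ≤ B / 2) (k : ℤ) :
    k.natAbs * B - B / 2 ≤ |x + k * B| := by
  have := abs_sub_abs_le_abs_sub (k * B) (-x)
  rw [abs_mul, abs_of_nonneg hB, abs_neg, sub_neg_eq_add, add_comm, ← Int.cast_abs,
    ← Nat.cast_natAbs] at this
  linarith

theorem abs_add_int_mul_le {x B : ℝ} (hB : 0 ≤ B) (hx : |x| ≤ B / 2) (k : ℤ) :
    |x + k * B| ≤ k.natAbs * B + B / 2 := by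
  have := abs_add_le x (k * B)
  rw [abs_mul, abs_of_nonneg hB, ← Int.cast_abs, ← Nat.cast_natAbs] at this
  linarith

theorem linear_mul_exp_neg_abs_le {c B D E t : ℝ} (n : ℕ) (hc : 0 ≤ c) (hD : 0 ≤ D)
    (hE : 0 ≤ E) (hlo : n * B - B / 2 ≤ |t|) (hhi : |t| ≤ n * B + B / 2) :
    E * (|t| + D) * exp (-c * |t|)
      ≤ E * exp (c * B / 2) * ((B * n + (B / 2 + D)) * exp (-c * B) ^ n) := by
  have hexp : exp (-c * |t|) ≤ exp (c * B / 2) * exp (-c * B) ^ n := by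
    rw [← exp_nat_mul, ← exp_add]
    exact exp_le_exp.2 (by nlinarith)
  calc E * (|t| + D) * exp (-c * |t|)
      ≤ E * (B * n + (B / 2 + D)) * (exp (c * B / 2) * exp (-c * B) ^ n) := by
        refine mul_le_mul ?_ hexp (exp_pos _).le (mul_nonneg hE (by linarith [abs_nonneg t]))
        exact mul_le_mul_of_nonneg_left (by linarith) hE
    _ = E * exp (c * B / 2) * ((B * n + (B / 2 + D)) * exp (-c * B) ^ n) := by ring

theorem periodized_tail_bound_linear_general (c B D A E : ℝ) (m : ℤ) (g : ℝ → ℂ)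
    (hc : 0 < c) (hB : 0 < B) (hD : 0 ≤ D)
    (hm : |(m : ℝ) / A| ≤ B / 2)
    (hg : ∀ t : ℝ, ‖g t‖ ≤ E * (|t| + D) * Real.exp (-c * |t|)) :
    ‖∑' k : {k : ℤ // k ≠ 0}, g ((m : ℝ) / A + (k : ℤ) * B)‖
      ≤ E / Real.sinh (c * B / 2) * (B / 2 + D + B / (1 - Real.exp (-c * B))) := by
  have hE : 0 ≤ E := by
    have := (norm_nonneg _).trans (hg 1)
    exact nonneg_of_mul_nonneg_left (nonneg_of_mul_nonneg_left this (exp_pos _))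
      (by rw [abs_one]; linarith)
  have hq₁ : exp (-c * B) < 1 := exp_lt_one_iff.2 (by nlinarith)
  have hmajorant := hasSum_int_ne_zero_natAbs
    (f := fun n ↦ E * exp (c * B / 2) * ((B * n + (B / 2 + D)) * exp (-c * B) ^ n))
    ((hasSum_linear_mul_geometric_succ (exp_pos _).le hq₁ B (B / 2 + D)).mul_left
      (E * exp (c * B / 2)))
  refine (tsum_of_norm_bounded hmajorant fun k ↦ (hg _).trans ?_).trans_eq ?_
  · exact linear_mul_exp_neg_abs_le _ hc.le hD hE (abs_add_int_mul_ge hB.le hm k)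
      (abs_add_int_mul_le hB.le hm k)
  · rw [div_eq_mul_inv E, inv_sinh_half_eq, neg_mul]
    ring

theorem periodized_tail_bound_linear (c B D A E : ℝ) (m : ℤ) (g : ℝ → ℂ)
    (hc : 0 < c) (hB : 0 < B) (hD : 0 ≤ D) (hA : 0 < A)
    (hm : |(m : ℝ) / A| ≤ B / 2)
    (hg : ∀ t : ℝ, ‖g t‖ ≤ E * (|t| + D) * Real.exp (-c * |t|)) :
    ‖∑' k : {k : ℤ // k ≠ 0}, g ((m : ℝ) / A + (k : ℤ) * B)‖
      ≤ E / Real.sinh (c * B / 2) * (B / 2 + D + B / (1 - Real.exp (-c * B))) :=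
  periodized_tail_bound_linear_general c B D A E m g hc hB hD hm hg
end
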